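/- Let k ≥ 2 and let Y be a standard normal random variable, and let Φ denote the standard normal cumulative distribution function. Then there exists m > 0 such that, setting μ_i = m + i/m for i = 1, …, k, for all nonnegative weights w₁, …, w_k summing to 1 and all c > 0, the random variable Z_c = Σ_{i=1}^k w_i·Φ((Y − μ_i)/c) satisfies Var(Z_c) < 1/12. -/

import Mathlib

open MeasureTheory ProbabilityTheory

/-- The standard normal cumulative distribution function `Φ`. -/
noncomputable def stdNormalCDF (x : ℝ) : ℝ :=
  (ProbabilityTheory.gaussianReal 0 1 (Set.Iic x)).toReal

/-!
Take `m = 4`, so that every mean `μᵢ` exceeds `4`. The pooled value `Z = G_c(Y)` lies in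
`[0, 1]`, and on `{Y < 4}` every `Φ((Y - μᵢ)/c)` is at most `Φ(0) = 1/2`, so `Z ≤ 1/2` there.
Hence `Var Z ≤ 𝔼[(Z - 1/4)²] ≤ 1/16 + P(Y ≥ 4)/2`, and the Chernoff bound
`P(Y ≥ 4) ≤ e⁻⁸ < 1/24` gives `Var Z < 1/16 + 1/48 = 1/12`, whatever the weights and `c`.
-/

open Real Set NNReal

lemma stdNormalCDF_eq_cdf : stdNormalCDF = cdf (gaussianReal 0 1) := by
  ext x
  rw [cdf_eq_real]
  rfl

lemma measurable_stdNormalCDF : Measurable stdNormalCDF :=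
  stdNormalCDF_eq_cdf ▸ (monotone_cdf _).measurable

lemma stdNormalCDF_zero : stdNormalCDF 0 = 1 / 2 := by
  set γ := gaussianReal 0 1
  have := nullSingletonClass_gaussianReal (μ := 0) one_ne_zero
  have hsymm : γ.real (Iic 0) = γ.real (Ioi 0) := by
    calc γ.real (Iic 0) = (γ.map (fun x ↦ -x)).real (Iic 0) := by
          rw [gaussianReal_map_neg, neg_zero]
      _ = γ.real (Ici 0) := by
          rw [map_measureReal_apply (by fun_prop) measurableSet_Iic]
          congr 1
          ext x
          simp
      _ = γ.real (Ioi 0) := measureReal_congr Ioi_ae_eq_Ici.symm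
  have hcompl : γ.real (Iic 0) + γ.real (Ioi 0) = 1 := by
    rw [← compl_Iic, measureReal_compl measurableSet_Iic, probReal_univ]
    ring
  change γ.real (Iic 0) = 1 / 2
  linarith

lemma stdNormalCDF_le_half {x : ℝ} (hx : x ≤ 0) : stdNormalCDF x ≤ 1 / 2 :=
  stdNormalCDF_zero ▸ stdNormalCDF_eq_cdf ▸ monotone_cdf _ hx

lemma hasSubgaussianMGF_id_gaussianReal (v : ℝ≥0) :
    HasSubgaussianMGF id v (gaussianReal 0 v) where
  integrable_exp_mul := integrable_exp_mul_gaussianReal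
  mgf_le t := by simp [mgf_id_gaussianReal]

lemma gaussianReal_real_Ici_le (v : ℝ≥0) {ε : ℝ} (hε : 0 ≤ ε) :
    (gaussianReal 0 v).real (Ici ε) ≤ exp (-ε ^ 2 / (2 * v)) :=
  (hasSubgaussianMGF_id_gaussianReal v).measure_ge_le hε

lemma Finset.sum_mul_le_of_le {ι : Type*} {s : Finset ι} {w g : ι → ℝ} {b : ℝ}
    (hw : ∀ i ∈ s, 0 ≤ w i) (hw1 : ∑ i ∈ s, w i = 1) (hg : ∀ i ∈ s, g i ≤ b) :
    ∑ i ∈ s, w i * g i ≤ b :=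
  calc ∑ i ∈ s, w i * g i ≤ ∑ i ∈ s, w i * b :=
        Finset.sum_le_sum fun i hi ↦ mul_le_mul_of_nonneg_left (hg i hi) (hw i hi)
    _ = b := by rw [← Finset.sum_mul, hw1, one_mul]

lemma variance_le_of_le_half_of_notMem {α : Type*} [MeasurableSpace α] {μ : Measure α}
    [IsProbabilityMeasure μ] {f : α → ℝ} {A : Set α} (hf : AEMeasurable f μ)
    (hA : MeasurableSet A) (hf01 : ∀ x, f x ∈ Icc 0 1) (hhalf : ∀ x ∉ A, f x ≤ 1 / 2) :
    Var[f; μ] ≤ 1 / 16 + μ.real A / 2 := by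
  have hpt : ∀ x, (f x - 1 / 4) ^ 2 ≤ 1 / 16 + A.indicator (fun _ ↦ (1 / 2 : ℝ)) x := by
    intro x
    obtain ⟨h0, h1⟩ := hf01 x
    by_cases hx : x ∈ A
    · rw [indicator_of_mem hx]; nlinarith
    · rw [indicator_of_notMem hx]; nlinarith [hhalf x hx]
  have hbdd : Integrable (fun x ↦ 1 / 16 + A.indicator (fun _ ↦ (1 / 2 : ℝ)) x) μ :=
    (integrable_const _).add ((integrable_const _).indicator hA)
  calc Var[f; μ] = Var[fun x ↦ f x - 1 / 4; μ] :=
        (variance_sub_const hf.aestronglyMeasurable _).symm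
    _ ≤ μ[(fun x ↦ f x - 1 / 4) ^ 2] :=
        variance_le_expectation_sq (hf.sub_const _).aestronglyMeasurable
    _ ≤ ∫ x, 1 / 16 + A.indicator (fun _ ↦ (1 / 2 : ℝ)) x ∂μ :=
        integral_mono_of_nonneg (ae_of_all _ fun x ↦ sq_nonneg _) hbdd (ae_of_all _ hpt)
    _ = 1 / 16 + μ.real A / 2 := by
        rw [integral_add (integrable_const _) ((integrable_const _).indicator hA),
          integral_const, integral_indicator_const _ hA]
        simp [div_eq_mul_inv, mul_comm]

noncomputable def spreadAdjustedPool (k : ℕ) (w μ : ℕ → ℝ) (c y : ℝ) : ℝ :=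
  ∑ i ∈ Finset.range k, w i * stdNormalCDF ((y - μ i) / c)

section spreadAdjustedPool

variable {k : ℕ} {w μ : ℕ → ℝ} {c : ℝ}

lemma measurable_spreadAdjustedPool : Measurable (spreadAdjustedPool k w μ c) :=
  Finset.measurable_sum _ fun _ _ ↦
    measurable_const.mul (measurable_stdNormalCDF.comp ((measurable_id.sub_const _).div_const _))

variable (hw : ∀ i < k, 0 ≤ w i) (hw1 : ∑ i ∈ Finset.range k, w i = 1)
include hw hw1

lemma spreadAdjustedPool_mem_Icc (y : ℝ) : spreadAdjustedPool k w μ c y ∈ Icc 0 1 := by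
  simp only [stdNormalCDF_eq_cdf, spreadAdjustedPool]
  have hw' : ∀ i ∈ Finset.range k, 0 ≤ w i := fun i hi ↦ hw i (Finset.mem_range.1 hi)
  exact ⟨Finset.sum_nonneg fun i hi ↦ mul_nonneg (hw' i hi) (cdf_nonneg _ _),
    Finset.sum_mul_le_of_le hw' hw1 fun _ _ ↦ cdf_le_one _ _⟩

lemma spreadAdjustedPool_le_half (hc : 0 ≤ c) {y : ℝ} (hy : ∀ i < k, y ≤ μ i) :
    spreadAdjustedPool k w μ c y ≤ 1 / 2 :=
  Finset.sum_mul_le_of_le (fun i hi ↦ hw i (Finset.mem_range.1 hi)) hw1 fun i hi ↦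
    stdNormalCDF_le_half (div_nonpos_of_nonpos_of_nonneg
      (sub_nonpos.2 (hy i (Finset.mem_range.1 hi))) hc)

end spreadAdjustedPool

lemma exp_neg_eight_lt : exp (-8) < 1 / 24 := by
  have h25 : 25 ≤ exp 8 := by
    have h5 : 5 ≤ exp 4 := by linarith [add_one_le_exp 4]
    calc (25 : ℝ) = 5 * 5 := by norm_num
      _ ≤ exp 4 * exp 4 := mul_le_mul h5 h5 (by norm_num) (exp_nonneg _)
      _ = exp 8 := by rw [← exp_add]; norm_num
  rw [exp_neg, inv_lt_comm₀ (exp_pos _) (by norm_num)]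
  linarith

theorem slp_not_flexibly_dispersive_general
    {Ω : Type*} [MeasurableSpace Ω] (Q : Measure Ω) [IsProbabilityMeasure Q]
    (k : ℕ)
    (Y : Ω → ℝ) (hYlaw : Q.map Y = gaussianReal 0 1) :
    ∃ m : ℝ, 0 < m ∧
      ∀ w : ℕ → ℝ, (∀ i < k, 0 ≤ w i) → ∑ i ∈ Finset.range k, w i = 1 →
        ∀ c : ℝ, 0 < c →
          variance
            (fun ω => ∑ i ∈ Finset.range k,
              w i * stdNormalCDF ((Y ω - (m + ((i : ℝ) + 1) / m)) / c)) Q < 1 / 12 := by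
  refine ⟨4, by norm_num, fun w hw hw1 c hc => ?_⟩
  let μ : ℕ → ℝ := fun i ↦ 4 + ((i : ℝ) + 1) / 4
  let G := spreadAdjustedPool k w μ c
  have hG : AEMeasurable G (gaussianReal 0 1) := measurable_spreadAdjustedPool.aemeasurable
  have hY : AEMeasurable Y Q := .of_map_ne_zero (hYlaw ▸ IsProbabilityMeasure.ne_zero _)
  have hlaw : Var[G ∘ Y; Q] = Var[G; gaussianReal 0 1] := by
    rw [← variance_map (hYlaw ▸ hG) hY, hYlaw]
  have hhalf : ∀ y ∉ Ici (4 : ℝ), G y ≤ 1 / 2 := fun y hy ↦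
    spreadAdjustedPool_le_half hw hw1 hc.le fun i _ ↦ by
      have : (0 : ℝ) ≤ ((i : ℝ) + 1) / 4 := by positivity
      simp only [μ]
      linarith [not_le.1 (mem_Ici.not.1 hy)]
  have htail := gaussianReal_real_Ici_le 1 (by norm_num : (0 : ℝ) ≤ 4)
  calc Var[G ∘ Y; Q]
      ≤ 1 / 16 + (gaussianReal 0 1).real (Ici 4) / 2 :=
        hlaw ▸ variance_le_of_le_half_of_notMem hG measurableSet_Ici
          (spreadAdjustedPool_mem_Icc hw hw1) hhalf
    _ < 1 / 12 := by norm_num at htail; linarith [exp_neg_eight_lt]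

/-- With a standard normal observation `Y`, there exists `m > 0` such
that, taking components `F_i = N(μ_i, 1)` with `μ_i = m + i/m` for `i = 1, …, k`
(indexed here by `i = 0, …, k−1` via `μ = m + (i+1)/m`), every spread-adjusted linear pool
`Z_c = Σᵢ wᵢ Φ((Y − μᵢ)/c)` with nonnegative weights summing to one and spread parameter
`c > 0` has `Var(Z_c) < 1/12`: the spread-adjusted linear pool fails to be flexibly
dispersive (Gneiting–Ranjan). -/
theorem slp_not_flexibly_dispersive
    {Ω : Type*} [MeasurableSpace Ω] (Q : Measure Ω) [IsProbabilityMeasure Q]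
    (k : ℕ) (hk : 2 ≤ k)
    (Y : Ω → ℝ) (hYmeas : Measurable Y) (hYlaw : Q.map Y = gaussianReal 0 1) :
    ∃ m : ℝ, 0 < m ∧
      ∀ w : ℕ → ℝ, (∀ i < k, 0 ≤ w i) → ∑ i ∈ Finset.range k, w i = 1 →
        ∀ c : ℝ, 0 < c →
          variance
            (fun ω => ∑ i ∈ Finset.range k,
              w i * stdNormalCDF ((Y ω - (m + ((i : ℝ) + 1) / m)) / c)) Q < 1 / 12 :=
  slp_not_flexibly_dispersive_general Q k Y hYlaw
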